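/- Let X ~ N(μ, 1) with μ > 0 and λ > 0. Then E[X ∣ |X| > λ] = μ + (φ(λ−μ) − φ(λ+μ))/(Φ(μ−λ) + Φ(−μ−λ)), and this correction term is strictly positive when μ > 0. -/

import Mathlib

open MeasureTheory ProbabilityTheory Real Set Filter Topology
open scoped ENNReal NNReal

/-- Standard normal density. -/
noncomputable def stdPhiPDF (x : ℝ) : ℝ :=
  (Real.sqrt (2 * Real.pi))⁻¹ * Real.exp (-x ^ 2 / 2)

/-- Standard normal cumulative distribution function. -/
noncomputable def stdPhiCDF (x : ℝ) : ℝ := ∫ t in Set.Iic x, stdPhiPDF t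

lemma stdPhiPDF_eq : stdPhiPDF = gaussianPDFReal 0 1 := by
  ext x
  simp [stdPhiPDF, gaussianPDFReal]

lemma phi_pos (x : ℝ) : 0 < stdPhiPDF x := by
  rw [stdPhiPDF]; positivity

lemma phi_integrable : Integrable stdPhiPDF := by
  rw [stdPhiPDF_eq]; exact integrable_gaussianPDFReal 0 1

lemma phi_integral : ∫ x, stdPhiPDF x = 1 := by
  rw [stdPhiPDF_eq]; exact integral_gaussianPDFReal_eq_one 0 one_ne_zero

lemma phi_even (x : ℝ) : stdPhiPDF (-x) = stdPhiPDF x := by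
  simp [stdPhiPDF, neg_pow]

lemma phi_cont : Continuous stdPhiPDF := by
  unfold stdPhiPDF; fun_prop

lemma hasDerivAt_phi (x : ℝ) : HasDerivAt stdPhiPDF (-x * stdPhiPDF x) x := by
  have h : HasDerivAt (fun y : ℝ => -y ^ 2 / 2) (-x) x := by
    have := ((hasDerivAt_pow 2 x).neg.div_const 2)
    exact this.congr_deriv (by norm_num; ring)
  have h2 := (h.exp.const_mul ((Real.sqrt (2 * Real.pi))⁻¹))
  exact h2.congr_deriv (by unfold stdPhiPDF; ring)

lemma Phi_eq (x : ℝ) : stdPhiCDF x = stdPhiCDF 0 + ∫ t in (0:ℝ)..x, stdPhiPDF t := by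
  rw [← intervalIntegral.integral_Iic_sub_Iic phi_integrable.integrableOn phi_integrable.integrableOn]
  unfold stdPhiCDF; ring

lemma hasDerivAt_Phi (x : ℝ) : HasDerivAt stdPhiCDF (stdPhiPDF x) x := by
  have h : HasDerivAt (fun u => ∫ t in (0:ℝ)..u, stdPhiPDF t) (stdPhiPDF x) x :=
    intervalIntegral.integral_hasDerivAt_right (phi_integrable.intervalIntegrable)
      (phi_cont.stronglyMeasurable.stronglyMeasurableAtFilter) phi_cont.continuousAt
  have := h.const_add (stdPhiCDF 0)
  rw [show stdPhiCDF = fun u => stdPhiCDF 0 + ∫ t in (0:ℝ)..u, stdPhiPDF t from funext Phi_eq]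
  exact this

lemma Phi_tendsto_atTop : Tendsto stdPhiCDF atTop (𝓝 1) := by
  have h := tendsto_setIntegral_of_monotone (μ := volume) (f := stdPhiPDF)
    (s := fun r : ℝ => Iic r) (fun r => measurableSet_Iic)
    (fun a b hab => Iic_subset_Iic.2 hab)
    (by rw [iUnion_Iic]; exact phi_integrable.integrableOn)
  rw [iUnion_Iic, Measure.restrict_univ, phi_integral] at h
  exact h

lemma Phi_neg (x : ℝ) : stdPhiCDF (-x) = 1 - stdPhiCDF x := by
  have h1 := integral_comp_neg_Ioi x stdPhiPDF
  simp_rw [phi_even] at h1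
  have h2 := intervalIntegral.integral_Iic_add_Ioi (b := x) (f := stdPhiPDF) (μ := volume)
    phi_integrable.integrableOn phi_integrable.integrableOn
  rw [phi_integral] at h2
  unfold stdPhiCDF
  linarith

lemma Phi_tendsto_atBot : Tendsto stdPhiCDF atBot (𝓝 0) := by
  have h := Phi_tendsto_atTop.comp tendsto_neg_atBot_atTop
  have h2 : Tendsto (fun y => 1 - stdPhiCDF (-y)) atBot (𝓝 0) := by
    simpa using h.const_sub 1
  exact h2.congr fun y => by rw [← Phi_neg, neg_neg]

lemma Phi_nonneg (x : ℝ) : 0 ≤ stdPhiCDF x :=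
  setIntegral_nonneg measurableSet_Iic fun t _ => (phi_pos t).le

lemma Phi_pos (x : ℝ) : 0 < stdPhiCDF x := by
  have h1 : (0:ℝ) ≤ stdPhiCDF (x - 1) := Phi_nonneg _
  have h2 : stdPhiCDF x - stdPhiCDF (x - 1) = ∫ t in (x-1)..x, stdPhiPDF t :=
    intervalIntegral.integral_Iic_sub_Iic phi_integrable.integrableOn phi_integrable.integrableOn
  have h3 : 0 < ∫ t in (x-1)..x, stdPhiPDF t :=
    intervalIntegral.intervalIntegral_pos_of_pos phi_integrable.intervalIntegrable
      (fun t => phi_pos t) (by linarith)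
  linarith

lemma phi_tendsto_atTop : Tendsto stdPhiPDF atTop (𝓝 0) := by
  unfold stdPhiPDF
  rw [show (0:ℝ) = (Real.sqrt (2 * Real.pi))⁻¹ * 0 by ring]
  refine Tendsto.const_mul _ (Real.tendsto_exp_atBot.comp ?_)
  have h : Tendsto (fun x : ℝ => x ^ 2) atTop atTop := tendsto_pow_atTop two_ne_zero
  have h2 := (h.atTop_mul_const (show (0:ℝ) < 2⁻¹ by norm_num))
  refine (tendsto_neg_atBot_iff.mpr h2).congr fun x => by ring

lemma phi_tendsto_atBot : Tendsto stdPhiPDF atBot (𝓝 0) :=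
  (phi_tendsto_atTop.comp tendsto_neg_atBot_atTop).congr fun y => phi_even y

lemma pdf_shift (m x : ℝ) : gaussianPDFReal m 1 x = stdPhiPDF (x - m) := by
  rw [stdPhiPDF_eq, gaussianPDFReal_sub, zero_add]

lemma xphi_integrable (m : ℝ) : Integrable (fun x => x * stdPhiPDF (x - m)) := by
  have h0 : Integrable (fun y : ℝ => y * stdPhiPDF y) := by
    have h := (integrable_mul_exp_neg_mul_sq (b := (2:ℝ)⁻¹) (by norm_num)).const_mul
      ((Real.sqrt (2 * Real.pi))⁻¹)
    have hfun : (fun y : ℝ => y * stdPhiPDF y)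
        = fun y : ℝ => (Real.sqrt (2 * Real.pi))⁻¹ * (y * Real.exp (-(2:ℝ)⁻¹ * y ^ 2)) := by
      funext y
      unfold stdPhiPDF
      rw [show -(2:ℝ)⁻¹ * y ^ 2 = -y ^ 2 / 2 by ring]
      ring
    rw [hfun]
    exact h
  have h1 : Integrable (fun y : ℝ => (y + m) * stdPhiPDF y) := by
    refine (h0.add (phi_integrable.const_mul m)).congr (Eventually.of_forall fun y => ?_)
    simp only [Pi.add_apply]
    ring
  exact (h1.comp_sub_right m).congr (Eventually.of_forall fun x => by simp)

lemma hasDerivAt_F1 (m x : ℝ) : HasDerivAt (fun y => stdPhiCDF (y - m)) (stdPhiPDF (x - m)) x := by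
  have h := (hasDerivAt_Phi (x - m)).comp x ((hasDerivAt_id x).sub_const m)
  rw [mul_one] at h; exact h

lemma F1_tendsto_atTop (m : ℝ) : Tendsto (fun y => stdPhiCDF (y - m)) atTop (𝓝 1) :=
  Phi_tendsto_atTop.comp (tendsto_atTop_add_const_right atTop (-m) tendsto_id)

lemma F1_tendsto_atBot (m : ℝ) : Tendsto (fun y => stdPhiCDF (y - m)) atBot (𝓝 0) :=
  Phi_tendsto_atBot.comp (tendsto_atBot_add_const_right atBot (-m) tendsto_id)

lemma int_Ioi_pdf (m a : ℝ) : ∫ x in Ioi a, stdPhiPDF (x - m) = 1 - stdPhiCDF (a - m) := by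
  have := integral_Ioi_of_hasDerivAt_of_tendsto' (f := fun y => stdPhiCDF (y - m)) (a := a)
    (fun x _ => hasDerivAt_F1 m x)
    ((phi_integrable.comp_sub_right m).integrableOn) (F1_tendsto_atTop m)
  rw [this]

lemma int_Iic_pdf (m a : ℝ) : ∫ x in Iic a, stdPhiPDF (x - m) = stdPhiCDF (a - m) := by
  have := integral_Iic_of_hasDerivAt_of_tendsto' (f := fun y => stdPhiCDF (y - m)) (a := a)
    (fun x _ => hasDerivAt_F1 m x)
    ((phi_integrable.comp_sub_right m).integrableOn) (F1_tendsto_atBot m)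
  rw [this, sub_zero]

lemma hasDerivAt_F2 (m x : ℝ) :
    HasDerivAt (fun y => m * stdPhiCDF (y - m) - stdPhiPDF (y - m)) (x * stdPhiPDF (x - m)) x := by
  have h1 := (hasDerivAt_F1 m x).const_mul m
  have h2 : HasDerivAt (fun y => stdPhiPDF (y - m)) (-(x - m) * stdPhiPDF (x - m)) x := by
    have h := (hasDerivAt_phi (x - m)).comp x ((hasDerivAt_id x).sub_const m)
    rw [mul_one] at h; exact h
  have := h1.sub h2
  exact this.congr_deriv (by ring)

lemma F2_tendsto_atTop (m : ℝ) :
    Tendsto (fun y => m * stdPhiCDF (y - m) - stdPhiPDF (y - m)) atTop (𝓝 m) := by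
  have h1 := (F1_tendsto_atTop m).const_mul m
  have h2 := phi_tendsto_atTop.comp (tendsto_atTop_add_const_right atTop (-m) tendsto_id)
  simpa [sub_eq_add_neg] using h1.sub h2

lemma F2_tendsto_atBot (m : ℝ) :
    Tendsto (fun y => m * stdPhiCDF (y - m) - stdPhiPDF (y - m)) atBot (𝓝 0) := by
  have h1 := (F1_tendsto_atBot m).const_mul m
  have h2 := phi_tendsto_atBot.comp (tendsto_atBot_add_const_right atBot (-m) tendsto_id)
  simpa [sub_eq_add_neg] using h1.sub h2

lemma int_Ioi_xpdf (m a : ℝ) :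
    ∫ x in Ioi a, x * stdPhiPDF (x - m)
      = m * (1 - stdPhiCDF (a - m)) + stdPhiPDF (a - m) := by
  have := integral_Ioi_of_hasDerivAt_of_tendsto'
    (f := fun y => m * stdPhiCDF (y - m) - stdPhiPDF (y - m)) (a := a)
    (fun x _ => hasDerivAt_F2 m x) ((xphi_integrable m).integrableOn) (F2_tendsto_atTop m)
  rw [this]; ring

lemma int_Iic_xpdf (m a : ℝ) :
    ∫ x in Iic a, x * stdPhiPDF (x - m)
      = m * stdPhiCDF (a - m) - stdPhiPDF (a - m) := by
  have := integral_Iic_of_hasDerivAt_of_tendsto'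
    (f := fun y => m * stdPhiCDF (y - m) - stdPhiPDF (y - m)) (a := a)
    (fun x _ => hasDerivAt_F2 m x) ((xphi_integrable m).integrableOn) (F2_tendsto_atBot m)
  rw [this]; ring

theorem stmt10 (m lam : ℝ) (hm : 0 < m) (hlam : 0 < lam) :
    ∫ x, x ∂(ProbabilityTheory.cond (gaussianReal m 1) {x | lam < |x|})
      = m + (stdPhiPDF (lam - m) - stdPhiPDF (lam + m)) /
            (stdPhiCDF (m - lam) + stdPhiCDF (-m - lam)) ∧
    0 < (stdPhiPDF (lam - m) - stdPhiPDF (lam + m)) /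
        (stdPhiCDF (m - lam) + stdPhiCDF (-m - lam)) := by
  have hPpos : 0 < stdPhiCDF (m - lam) + stdPhiCDF (-m - lam) :=
    add_pos (Phi_pos _) (Phi_pos _)
  have hnum : 0 < stdPhiPDF (lam - m) - stdPhiPDF (lam + m) := by
    have hlt : (lam - m) ^ 2 < (lam + m) ^ 2 := by nlinarith
    have hexp : Real.exp (-(lam + m) ^ 2 / 2) < Real.exp (-(lam - m) ^ 2 / 2) :=
      Real.exp_lt_exp.2 (by linarith)
    have hc : 0 < (Real.sqrt (2 * Real.pi))⁻¹ := by positivity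
    unfold stdPhiPDF
    nlinarith
  refine ⟨?_, div_pos hnum hPpos⟩
  set s : Set ℝ := {x | lam < |x|} with hs_def
  have hset : s = Iio (-lam) ∪ Ioi lam := by
    ext x
    simp only [hs_def, mem_setOf_eq, mem_union, mem_Iio, mem_Ioi, lt_abs]
    rw [lt_neg]
    tauto
  have hs_meas : MeasurableSet s := by
    rw [hset]; exact measurableSet_Iio.union measurableSet_Ioi
  have hdisj : Disjoint (Iio (-lam) : Set ℝ) (Ioi lam) :=
    (Iic_disjoint_Ioi (by linarith : (-lam : ℝ) ≤ lam)).mono_left Iio_subset_Iic_self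
  have e1 : (-lam - m : ℝ) = -m - lam := by ring
  have e2 : stdPhiPDF (-m - lam) = stdPhiPDF (lam + m) := by
    rw [show (-m - lam : ℝ) = -(lam + m) by ring, phi_even]
  have e3 : (1 : ℝ) - stdPhiCDF (lam - m) = stdPhiCDF (m - lam) := by
    rw [show (m - lam : ℝ) = -(lam - m) by ring, Phi_neg]
  have hpdfint : ∫ x in s, gaussianPDFReal m 1 x
      = stdPhiCDF (m - lam) + stdPhiCDF (-m - lam) := by
    rw [hset, setIntegral_union hdisj measurableSet_Ioi
      (integrable_gaussianPDFReal m 1).integrableOn (integrable_gaussianPDFReal m 1).integrableOn]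
    simp_rw [pdf_shift m]
    rw [setIntegral_congr_set Iio_ae_eq_Iic, int_Iic_pdf, int_Ioi_pdf, e1, e3]
    ring
  have hmeasval : (gaussianReal m 1) s
      = ENNReal.ofReal (stdPhiCDF (m - lam) + stdPhiCDF (-m - lam)) := by
    rw [gaussianReal_apply_eq_integral m one_ne_zero, hpdfint]
  have hxint : ∫ x in s, x ∂(gaussianReal m 1)
      = m * (stdPhiCDF (m - lam) + stdPhiCDF (-m - lam))
        + (stdPhiPDF (lam - m) - stdPhiPDF (lam + m)) := by
    rw [gaussianReal_of_var_ne_zero m one_ne_zero]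
    rw [restrict_withDensity hs_meas]
    have hgp : gaussianPDF m 1 = fun x => ((gaussianPDFReal m 1 x).toNNReal : ℝ≥0∞) := rfl
    rw [hgp, integral_withDensity_eq_integral_smul (measurable_gaussianPDFReal m 1).real_toNNReal]
    have hsm : ∀ x : ℝ, ((gaussianPDFReal m 1 x).toNNReal : ℝ≥0) • x
        = x * stdPhiPDF (x - m) := by
      intro x
      rw [NNReal.smul_def, Real.coe_toNNReal _ (gaussianPDFReal_nonneg m 1 x), pdf_shift,
        smul_eq_mul, mul_comm]
    simp_rw [hsm]
    rw [hset, setIntegral_union hdisj measurableSet_Ioi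
      (xphi_integrable m).integrableOn (xphi_integrable m).integrableOn]
    rw [setIntegral_congr_set Iio_ae_eq_Iic, int_Iic_xpdf, int_Ioi_xpdf, e1, e2, e3]
    ring
  rw [show ProbabilityTheory.cond (gaussianReal m 1) s
    = ((gaussianReal m 1) s)⁻¹ • (gaussianReal m 1).restrict s from rfl,
    integral_smul_measure, hmeasval]
  rw [ENNReal.toReal_inv, ENNReal.toReal_ofReal hPpos.le, smul_eq_mul]
  rw [show (∫ x, x ∂((gaussianReal m 1).restrict s)) = ∫ x in s, x ∂(gaussianReal m 1) from rfl,
    hxint]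
  field_simp
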